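/- The signed Stirling numbers of the first kind satisfy s(n, n−p) = ((n−1)!/(n−p−1)!) · Σ over tuples (k_1,...,k_p) of non-negative integers with Σ_m m·k_m = p of binom(n+K−1, K) · (K!/(k_1!···k_p!)) · (−1/2!)^{k_1} (−1/3!)^{k_2} ··· (−1/(p+1)!)^{k_p}, where K = k_1+···+k_p, valid for 0 ≤ p ≤ n−1. -/

import Mathlib

/-!
Write `B = X / (exp X - 1)` (Mathlib's `bernoulliPowerSeries`), so that `B_p^{(n)} = p! [X^p] B^n`.
The Nörlund relation `s(n, n-p) = (n-1)(n-2)⋯(n-p) · [X^p] B^n` follows by induction from the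
recurrence `s(n+1, k+1) = s(n, k) - n s(n, k+1)`, since the differential equation
`X B' = B - B² - X B` gives the matching recurrence for the coefficients of `B^n`.
Writing `1 / B = 1 + Y` with `Y = ∑_{m ≥ 1} X^m / (m+1)!`, the binomial series gives
`B^n = ∑_K (-1)^K C(n+K-1, K) Y^K`, in which only `K ≤ p` contributes to `[X^p]`, and the
multinomial theorem expands `[X^p] Y^K` as a sum over the tuples `(k_1, …, k_p)` with
`∑ k_m = K` and `∑ m k_m = p`.
-/

/-- The signed Stirling numbers of the first kind: the coefficients in
`x(x-1)⋯(x-n+1) = ∑_k s(n,k) x^k`. -/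
noncomputable def stirling1 (n k : ℕ) : ℚ :=
  (∏ i ∈ Finset.range n, (Polynomial.X - Polynomial.C (i : ℚ))).coeff k

open Finset PowerSeries Nat

namespace PowerSeries

variable {R : Type*} [CommRing R]

theorem coeff_subst_eq_sum_range {a : R⟦X⟧} (ha : constantCoeff a = 0) (f : R⟦X⟧)
    (p : ℕ) :
    coeff p (f.subst a) = ∑ d ∈ range (p + 1), coeff d f * coeff p (a ^ d) := by
  simp_rw [coeff_subst' (HasSubst.of_constantCoeff_zero' ha), smul_eq_mul]
  refine finsum_eq_sum_of_support_subset _ fun d hd => ?_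
  rw [coe_range, Set.mem_Iio, Nat.lt_succ_iff]
  by_contra! hpd
  have hdvd : X ^ d ∣ a ^ d := pow_dvd_pow_of_dvd (X_dvd_iff.mpr ha) d
  exact hd (by simp only [X_pow_dvd_iff.mp hdvd p hpd, mul_zero])

theorem coeff_binomialSeries_neg_natCast (n K : ℕ) :
    coeff K (binomialSeries ℚ (-n : ℤ)) = (-1) ^ K * ((n + K - 1).choose K : ℚ) := by
  rw [binomialSeries_coeff, Ring.choose_neg]
  rcases Nat.eq_zero_or_pos (n + K) with h | h
  · obtain ⟨rfl, rfl⟩ : n = 0 ∧ K = 0 := by omega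
    simp
  · rw [show (n + K - 1 : ℤ) = ((n + K - 1 : ℕ) : ℤ) by omega, Ring.choose_natCast,
      Units.smul_def, Int.coe_negOnePow_natCast, smul_eq_mul, zsmul_one]
    push_cast
    rfl

theorem X_pow_succ_dvd_sub_sum_C_coeff_mul_X_pow {f : R⟦X⟧} (hf : constantCoeff f = 0)
    (p : ℕ) :
    X ^ (p + 1) ∣ f - ∑ i : Fin p, C (coeff (i + 1) f) * X ^ ((i : ℕ) + 1) := by
  refine X_pow_dvd_iff.mpr fun m hm => ?_
  rw [map_sub, map_sum, sub_eq_zero]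
  simp only [coeff_C_mul_X_pow]
  rcases m with _ | m
  · simpa using hf
  · rw [sum_eq_single_of_mem (⟨m, by omega⟩ : Fin p) (mem_univ _)]
    · simp
    · intro i _ hi
      rw [if_neg fun h => hi (Fin.ext (by simp at h ⊢; omega))]

theorem coeff_pow_eq_sum_multinomial {f : R⟦X⟧} (hf : constantCoeff f = 0) (p K : ℕ) :
    coeff p (f ^ K) =
      ∑ k ∈ (piAntidiag univ K).filter
          (fun k : Fin p → ℕ => ∑ i : Fin p, ((i : ℕ) + 1) * k i = p),
        (multinomial univ k : R) * ∏ i : Fin p, coeff ((i : ℕ) + 1) f ^ k i := by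
  have htrunc := (X_pow_succ_dvd_sub_sum_C_coeff_mul_X_pow hf p).trans
    (sub_dvd_pow_sub_pow _ _ K)
  have hcoeff := X_pow_dvd_iff.mp htrunc p p.lt_succ_self
  rw [map_sub, sub_eq_zero] at hcoeff
  rw [hcoeff, sum_pow_eq_sum_piAntidiag, map_sum, sum_filter]
  refine sum_congr rfl fun k _ => ?_
  simp_rw [mul_pow, ← map_pow, ← pow_mul, prod_mul_distrib, ← map_prod, prod_pow_eq_pow_sum,
    ← map_natCast (C (R := R)), ← mul_assoc, ← map_mul, coeff_C_mul_X_pow]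
  exact if_congr eq_comm rfl rfl

end PowerSeries

theorem sum_le_sum_succ_mul {p : ℕ} (k : Fin p → ℕ) :
    ∑ i, k i ≤ ∑ i : Fin p, ((i : ℕ) + 1) * k i :=
  sum_le_sum fun i _ => Nat.le_mul_of_pos_left _ i.val.succ_pos

theorem sum_range_sum_filter_piAntidiag_eq_sum_filter_piFinset {M : Type*} [AddCommMonoid M]
    (p : ℕ) (g : (Fin p → ℕ) → M) :
    ∑ K ∈ range (p + 1), ∑ k ∈ (piAntidiag univ K).filter
        (fun k : Fin p → ℕ => ∑ i : Fin p, ((i : ℕ) + 1) * k i = p), g k =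
      ∑ k ∈ (Fintype.piFinset fun _ : Fin p => range (p + 1)).filter
        (fun k => ∑ i : Fin p, ((i : ℕ) + 1) * k i = p), g k := by
  rw [← sum_fiberwise_of_maps_to (g := fun k : Fin p → ℕ => ∑ i, k i) (t := range (p + 1))]
  · refine sum_congr rfl fun K _ => sum_congr ?_ fun _ _ => rfl
    ext k
    simp only [mem_filter, mem_piAntidiag, Fintype.mem_piFinset, mem_range, mem_univ]
    constructor
    · rintro ⟨⟨rfl, -⟩, hk⟩
      refine ⟨⟨fun i => ?_, hk⟩, rfl⟩
      have := (single_le_sum (fun j _ => Nat.zero_le (k j)) (mem_univ i)).trans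
        (sum_le_sum_succ_mul k)
      omega
    · rintro ⟨⟨-, hk⟩, rfl⟩
      exact ⟨⟨rfl, fun _ _ => trivial⟩, hk⟩
  · intro k hk
    rw [mem_filter] at hk
    rw [mem_range]
    exact Nat.lt_succ_of_le ((sum_le_sum_succ_mul k).trans hk.2.le)

theorem stirling1_eq_coeff_descPochhammer (n k : ℕ) :
    stirling1 n k = (descPochhammer ℚ n).coeff k := by
  suffices ∏ i ∈ range n, (Polynomial.X - Polynomial.C (i : ℚ)) = descPochhammer ℚ n by
    rw [stirling1, this]
  induction n with
  | zero => simp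
  | succ n ih => rw [prod_range_succ, ih, descPochhammer_succ_right, Polynomial.C_eq_natCast]

theorem stirling1_succ_succ (n k : ℕ) :
    stirling1 (n + 1) (k + 1) = stirling1 n k - n * stirling1 n (k + 1) := by
  simp only [stirling1_eq_coeff_descPochhammer, descPochhammer_succ_right,
    ← Polynomial.C_eq_natCast, Polynomial.coeff_mul_X_sub_C]
  ring

theorem stirling1_self (n : ℕ) : stirling1 n n = 1 := by
  rw [stirling1_eq_coeff_descPochhammer]
  simpa using (monic_descPochhammer ℚ n).coeff_natDegree

theorem stirling1_succ_zero (n : ℕ) : stirling1 (n + 1) 0 = 0 := by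
  rw [stirling1_eq_coeff_descPochhammer, Polynomial.coeff_zero_eq_eval_zero,
    descPochhammer_ne_zero_eval_zero _ n.succ_ne_zero]

noncomputable def expSubOneDivX : ℚ⟦X⟧ := mk fun n => ((n + 1)! : ℚ)⁻¹

theorem X_mul_expSubOneDivX : X * expSubOneDivX = exp ℚ - 1 := by
  ext (_ | n)
  · simp
  · simp [expSubOneDivX, coeff_succ_X_mul, coeff_exp]

theorem constantCoeff_expSubOneDivX_sub_one : constantCoeff (expSubOneDivX - 1) = 0 := by
  rw [← coeff_zero_eq_constantCoeff_apply]
  simp [expSubOneDivX]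

theorem coeff_succ_expSubOneDivX_sub_one (m : ℕ) :
    coeff (m + 1) (expSubOneDivX - 1) = ((m + 2)! : ℚ)⁻¹ := by
  simp [expSubOneDivX]

theorem bernoulliPowerSeries_mul_expSubOneDivX :
    bernoulliPowerSeries ℚ * expSubOneDivX = 1 := by
  apply mul_left_cancel₀ (X_ne_zero (R := ℚ))
  rw [mul_left_comm, X_mul_expSubOneDivX, bernoulliPowerSeries_mul_exp_sub_one, mul_one]

theorem constantCoeff_bernoulliPowerSeries : constantCoeff (bernoulliPowerSeries ℚ) = 1 := by
  simp [bernoulliPowerSeries, ← coeff_zero_eq_constantCoeff_apply]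

theorem X_mul_derivative_bernoulliPowerSeries :
    X * d⁄dX ℚ (bernoulliPowerSeries ℚ) =
      bernoulliPowerSeries ℚ - bernoulliPowerSeries ℚ ^ 2 - X * bernoulliPowerSeries ℚ := by
  have hXdG : X * d⁄dX ℚ expSubOneDivX = X * expSubOneDivX + 1 - expSubOneDivX := by
    have h := congrArg (d⁄dX ℚ) X_mul_expSubOneDivX
    rw [Derivation.leibniz, derivative_X, map_sub, derivative_exp, Derivation.map_one_eq_zero,
      smul_eq_mul, smul_eq_mul] at h
    linear_combination h - X_mul_expSubOneDivX
  have hBG := bernoulliPowerSeries_mul_expSubOneDivX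
  have hdBG := congrArg (d⁄dX ℚ) hBG
  rw [Derivation.leibniz, Derivation.map_one_eq_zero, smul_eq_mul, smul_eq_mul] at hdBG
  linear_combination (bernoulliPowerSeries ℚ - X * bernoulliPowerSeries ℚ -
      X * d⁄dX ℚ (bernoulliPowerSeries ℚ)) * hBG + X * bernoulliPowerSeries ℚ * hdBG -
    bernoulliPowerSeries ℚ ^ 2 * hXdG

theorem X_mul_derivative_bernoulliPowerSeries_pow (n : ℕ) :
    X * d⁄dX ℚ (bernoulliPowerSeries ℚ ^ n) =
      (n : ℚ⟦X⟧) * (bernoulliPowerSeries ℚ ^ n - bernoulliPowerSeries ℚ ^ (n + 1) -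
        X * bernoulliPowerSeries ℚ ^ n) := by
  induction n with
  | zero => simp
  | succ n ih =>
    rw [pow_succ, Derivation.leibniz, smul_eq_mul, smul_eq_mul, mul_add, ← mul_assoc,
      mul_comm X, mul_assoc, X_mul_derivative_bernoulliPowerSeries, mul_left_comm, ih]
    push_cast
    ring

theorem succ_mul_coeff_succ_bernoulliPowerSeries_pow (n q : ℕ) :
    (q + 1 : ℚ) * coeff (q + 1) (bernoulliPowerSeries ℚ ^ n) =
      n * (coeff (q + 1) (bernoulliPowerSeries ℚ ^ n) -
        coeff (q + 1) (bernoulliPowerSeries ℚ ^ (n + 1)) -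
        coeff q (bernoulliPowerSeries ℚ ^ n)) := by
  have h := congrArg (coeff (q + 1)) (X_mul_derivative_bernoulliPowerSeries_pow n)
  rw [coeff_succ_X_mul, coeff_derivative, ← map_natCast (C (R := ℚ)), coeff_C_mul, map_sub,
    map_sub, coeff_succ_X_mul] at h
  linear_combination h

/-- The Nörlund relation `s(n, n-p) = C(n-1, p) B_p^{(n)}` for `n = k + p`. Indexing by `k` keeps
the case `p = n`, where both sides vanish, inside the induction. -/
theorem stirling1_add_eq_descFactorial_mul (k p : ℕ) :
    stirling1 (k + p) k =
      (k + p - 1).descFactorial p * coeff p (bernoulliPowerSeries ℚ ^ (k + p)) := by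
  induction k generalizing p with
  | zero =>
    cases p with
    | zero => simp [stirling1_self]
    | succ p => simp [stirling1_succ_zero]
  | succ k ihk =>
    induction p with
    | zero => simp [stirling1_self, constantCoeff_bernoulliPowerSeries]
    | succ q ihq =>
      have hrec := succ_mul_coeff_succ_bernoulliPowerSeries_pow (k + q + 1) q
      have hprev := ihk (q + 1)
      rw [← add_assoc] at hprev
      rw [add_right_comm] at ihq
      rw [show k + 1 + (q + 1) = k + q + 1 + 1 by ring, stirling1_succ_succ, hprev, ihq,
        Nat.add_sub_cancel, Nat.add_sub_cancel, Nat.succ_descFactorial_succ,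
        Nat.descFactorial_succ, Nat.add_sub_cancel]
      push_cast at hrec ⊢
      linear_combination -((k + q).descFactorial q : ℚ) * hrec

theorem bernoulliPowerSeries_pow_eq_subst (n : ℕ) :
    bernoulliPowerSeries ℚ ^ n = (binomialSeries ℚ (-n : ℤ)).subst (expSubOneDivX - 1) := by
  have hsubst := HasSubst.of_constantCoeff_zero' constantCoeff_expSubOneDivX_sub_one
  have hG : ((1 + X : ℚ⟦X⟧) ^ n).subst (expSubOneDivX - 1) = expSubOneDivX ^ n := by
    rw [subst_pow hsubst, subst_add hsubst, subst_X hsubst, ← map_one (C (R := ℚ)), subst_C]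
    simp
  have hinv :
      expSubOneDivX ^ n * (binomialSeries ℚ (-n : ℤ)).subst (expSubOneDivX - 1) = 1 := by
    rw [← hG, ← subst_mul hsubst, ← binomialSeries_nat (R := ℤ), ← binomialSeries_add,
      add_neg_cancel, binomialSeries_zero, ← map_one (C (R := ℚ)), subst_C]
    rfl
  calc bernoulliPowerSeries ℚ ^ n
      = bernoulliPowerSeries ℚ ^ n * (expSubOneDivX ^ n *
          (binomialSeries ℚ (-n : ℤ)).subst (expSubOneDivX - 1)) := by rw [hinv, mul_one]
    _ = _ := by
      rw [← mul_assoc, ← mul_pow, bernoulliPowerSeries_mul_expSubOneDivX, one_pow, one_mul]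

/-- `s(n, n-p) = ((n-1)!/(n-p-1)!) ∑_{∑ m k_m = p} C(n+K-1, K) · K!/(k_1!⋯k_p!) ·
(-1/2!)^{k_1}⋯(-1/(p+1)!)^{k_p}`, where `K = ∑ k_m`, for `0 ≤ p ≤ n-1`. -/
theorem stirling1_eq_sum_partitions (n p : ℕ) (hp : p + 1 ≤ n) :
    stirling1 n (n - p) =
      (((n - 1).factorial : ℚ) / ((n - p - 1).factorial : ℚ)) *
        ∑ k ∈ (Fintype.piFinset fun _ : Fin p => Finset.range (p + 1)).filter
            (fun k => ∑ i : Fin p, ((i : ℕ) + 1) * k i = p),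
          ((n + (∑ i : Fin p, k i) - 1).choose (∑ i : Fin p, k i) : ℚ) *
            (Nat.multinomial Finset.univ k : ℚ) *
            ∏ i : Fin p, (-((((i : ℕ) + 2).factorial : ℚ)⁻¹)) ^ k i := by
  have hnorlund := stirling1_add_eq_descFactorial_mul (n - p) p
  rw [Nat.sub_add_cancel (by omega)] at hnorlund
  rw [hnorlund, descFactorial_eq_div (by omega),
    Nat.cast_div (factorial_dvd_factorial (by omega)) (by positivity),
    show n - 1 - p = n - p - 1 by omega, bernoulliPowerSeries_pow_eq_subst,
    coeff_subst_eq_sum_range constantCoeff_expSubOneDivX_sub_one,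
    ← sum_range_sum_filter_piAntidiag_eq_sum_filter_piFinset]
  congr 1
  refine sum_congr rfl fun K _ => ?_
  rw [coeff_binomialSeries_neg_natCast,
    coeff_pow_eq_sum_multinomial constantCoeff_expSubOneDivX_sub_one, mul_sum]
  refine sum_congr rfl fun k hk => ?_
  obtain ⟨hK, -⟩ := mem_piAntidiag.mp (mem_filter.mp hk).1
  simp_rw [coeff_succ_expSubOneDivX_sub_one, ← hK]
  rw [prod_congr rfl fun i _ => neg_pow _ (k i), prod_mul_distrib, prod_pow_eq_pow_sum]
  ring
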